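/- arXiv:1111.3931 — 2 statements merged into one kernel-verified Lean document; each statement's English description precedes it below -/
import Mathlib

section
/- (Proposition 4.) Let n ≥ 2, let ℤ^{n−1} = ℤe₁ + ⋯ + ℤe_{n−1} be the (n−1)-dimensional lattice in ℝⁿ, and let q₀(x) = x/‖x‖ⁿ. Then the series q₀(x) + ∑_{m ∈ ℤ^{n−1} \ {0}} (q₀(x + m) − q₀(m)) converges normally on ℝⁿ \ ℤ^{n−1}; in particular, for every compact set K ⊆ ℝⁿ \ ℤ^{n−1} one has ∑_{m ∈ ℤ^{n−1} \ {0}} sup_{x ∈ K} ‖q₀(x+m) − q₀(m)‖ < ∞. -/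
noncomputable section

open scoped BigOperators

/-- The Cauchy kernel `q₀(x) = x / ‖x‖ⁿ` on `ℝⁿ`. -/
def q0 (n : ℕ) (x : EuclideanSpace ℝ (Fin n)) : EuclideanSpace ℝ (Fin n) :=
  (‖x‖ ^ n)⁻¹ • x

/-- The point `m₁e₁ + ⋯ + m_p e_p` of the lattice `ℤ^p ⊆ ℝⁿ`. -/
def latticeVec (n p : ℕ) (hp : p ≤ n) (m : Fin p → ℤ) : EuclideanSpace ℝ (Fin n) :=
  ∑ i : Fin p, (m i : ℝ) • EuclideanSpace.single (Fin.castLE hp i) 1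

/-!
For `‖x‖ ≤ R` and `‖v‖ ≥ 2R` the kernel `y ↦ y / ‖y‖ⁿ` varies by `O(R / ‖v‖ⁿ)` between `v` and
`x + v`, since its denominator changes by a bounded factor and its numerator by `‖x‖`. A compact
set is bounded, so all but finitely many terms of the series are dominated by `C · ‖m‖⁻ⁿ`, and
`∑_{m ∈ ℤ^{n-1}} ‖m‖⁻ⁿ` converges because `n - 1 < n`.
-/

open Filter Module Submodule

section InversePowerKernel

variable {E : Type*} [NormedAddCommGroup E] [NormedSpace ℝ E]

lemma abs_pow_sub_pow_mul_le {a b d : ℝ} (k : ℕ) (hab : |a - b| ≤ d) (hdb : d ≤ b) :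
    |b ^ k - a ^ k| * b ≤ k * 2 ^ k * d * b ^ k := by
  rcases k.eq_zero_or_pos with rfl | hk
  · simp
  have hmax : max |b| |a| ≤ 2 * b := by
    obtain ⟨h₁, h₂⟩ := abs_le.1 hab
    rw [abs_of_nonneg (by linarith), abs_of_nonneg (by linarith)]
    exact max_le (by linarith) (by linarith)
  calc |b ^ k - a ^ k| * b ≤ |b - a| * k * max |b| |a| ^ (k - 1) * b := by
        gcongr
        · linarith [abs_nonneg (a - b)]
        · exact abs_pow_sub_pow_le ..
    _ ≤ d * k * (2 * b) ^ (k - 1) * (2 * b) := by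
        have hd : 0 ≤ d := (abs_nonneg _).trans hab
        have hb : 0 ≤ b := hd.trans hdb
        rw [abs_sub_comm]
        gcongr
        linarith
    _ = k * 2 ^ k * d * b ^ k := by
        rw [mul_assoc _ ((2 * b) ^ (k - 1)), pow_sub_one_mul hk.ne', mul_pow]
        ring

theorem norm_inv_pow_smul_sub_inv_pow_smul_le (k : ℕ) {u v : E} (h : 2 * ‖u - v‖ ≤ ‖v‖) :
    ‖(‖u‖ ^ k)⁻¹ • u - (‖v‖ ^ k)⁻¹ • v‖ ≤ (k + 1) * 4 ^ k * ‖u - v‖ / ‖v‖ ^ k := by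
  rcases (norm_nonneg v).eq_or_lt with hv | hb
  · obtain rfl : u = v := by rw [← sub_eq_zero, ← norm_le_zero_iff]; linarith
    simp
  set a := ‖u‖
  set b := ‖v‖
  set d := ‖u - v‖
  have hab : |a - b| ≤ d := abs_norm_sub_norm_le u v
  have ha : b / 2 ≤ a := by linarith [(abs_le.1 hab).1]
  have ha₀ : 0 < a ^ k := pow_pos (by linarith) k
  have hb₀ : 0 < b ^ k := pow_pos hb k
  have hA : (a ^ k)⁻¹ ≤ 2 ^ k * (b ^ k)⁻¹ := calc
    (a ^ k)⁻¹ ≤ ((b / 2) ^ k)⁻¹ := inv_anti₀ (by positivity) (by gcongr)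
    _ = 2 ^ k * (b ^ k)⁻¹ := by rw [div_pow, inv_div, div_eq_inv_mul, mul_comm]
  have hsplit : (a ^ k)⁻¹ • u - (b ^ k)⁻¹ • v =
      (a ^ k)⁻¹ • (u - v) + ((a ^ k)⁻¹ - (b ^ k)⁻¹) • v := by
    module
  calc ‖(a ^ k)⁻¹ • u - (b ^ k)⁻¹ • v‖ ≤ (a ^ k)⁻¹ * d + |(a ^ k)⁻¹ - (b ^ k)⁻¹| * b := by
        rw [hsplit]
        refine (norm_add_le _ _).trans_eq ?_
        rw [norm_smul, norm_smul, Real.norm_eq_abs, Real.norm_eq_abs, abs_of_pos (inv_pos.2 ha₀)]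
    _ = (a ^ k)⁻¹ * d + |b ^ k - a ^ k| * b * (a ^ k)⁻¹ * (b ^ k)⁻¹ := by
        rw [inv_sub_inv' ha₀.ne' hb₀.ne', abs_mul, abs_mul, abs_of_pos (inv_pos.2 ha₀),
          abs_of_pos (inv_pos.2 hb₀)]
        ring
    _ ≤ (a ^ k)⁻¹ * d + k * 2 ^ k * d * b ^ k * (a ^ k)⁻¹ * (b ^ k)⁻¹ := by
        gcongr (a ^ k)⁻¹ * d + ?_ * (a ^ k)⁻¹ * (b ^ k)⁻¹
        exact abs_pow_sub_pow_mul_le k hab (by linarith)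
    _ = (1 + k * 2 ^ k) * d * (a ^ k)⁻¹ := by field_simp
    _ ≤ (1 + k * 2 ^ k) * d * (2 ^ k * (b ^ k)⁻¹) := by gcongr
    _ = (1 + k * 2 ^ k) * 2 ^ k * d / b ^ k := by ring
    _ ≤ (k + 1) * 4 ^ k * d / b ^ k := by
        have h4 : (4 : ℝ) ^ k = 2 ^ k * 2 ^ k := by rw [← mul_pow]; norm_num
        have h1 : (1 : ℝ) ≤ 2 ^ k := one_le_pow₀ (by norm_num)
        gcongr ?_ * d / b ^ k
        nlinarith

end InversePowerKernel

section IntegerPoints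

variable {ι : Type*} [Fintype ι]

lemma norm_intCast_pi (m : ι → ℤ) : ‖(fun i => (m i : ℝ))‖ = ‖m‖ := by
  refine le_antisymm ((pi_norm_le_iff_of_nonneg (norm_nonneg _)).2 fun i => ?_)
    ((pi_norm_le_iff_of_nonneg (norm_nonneg _)).2 fun i => ?_)
  · rw [Int.norm_cast_real]; exact norm_le_pi_norm m i
  · rw [← Int.norm_cast_real]; exact norm_le_pi_norm (fun i => (m i : ℝ)) i

theorem summable_norm_inv_pow_pi_int {k : ℕ} (hk : Fintype.card ι < k) :
    Summable fun m : ι → ℤ => ‖m‖⁻¹ ^ k := by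
  set L := span ℤ (Set.range (Pi.basisFun ℝ ι))
  have hrank : finrank ℤ L = Fintype.card ι := by
    rw [ZLattice.rank ℝ, finrank_fintype_fun_eq_card]
  have hmem (m : ι → ℤ) : (fun i => (m i : ℝ)) ∈ L :=
    ((Pi.basisFun ℝ ι).mem_span_iff_repr_mem ℤ _).2 fun i => ⟨m i, rfl⟩
  have hinj : Function.Injective fun m : ι → ℤ => (⟨fun i => (m i : ℝ), hmem m⟩ : L) :=
    fun m m' h => funext fun i => by simpa using congrFun (congrArg Subtype.val h) i
  simpa [Function.comp_def, norm_intCast_pi] using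
    (ZLattice.summable_norm_pow_inv L k (hrank ▸ hk)).comp_injective hinj

theorem tendsto_norm_pi_int_cofinite_atTop :
    Tendsto (fun m : ι → ℤ => ‖m‖) cofinite atTop := by
  rw [← cocompact_eq_cofinite]
  exact tendsto_norm_cocompact_atTop

end IntegerPoints

lemma latticeVec_apply_castLE (n p : ℕ) (hp : p ≤ n) (m : Fin p → ℤ) (i : Fin p) :
    latticeVec n p hp m (Fin.castLE hp i) = m i := by
  simp [latticeVec, Pi.single_apply, Fin.castLE_inj]

lemma norm_le_norm_latticeVec (n p : ℕ) (hp : p ≤ n) (m : Fin p → ℤ) :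
    ‖m‖ ≤ ‖latticeVec n p hp m‖ :=
  (pi_norm_le_iff_of_nonneg (norm_nonneg _)).2 fun i => by
    rw [← Int.norm_cast_real, ← latticeVec_apply_castLE n p hp m i]
    exact PiLp.norm_apply_le _ _

lemma norm_q0_add_sub_q0_le (n : ℕ) {R : ℝ} {x v : EuclideanSpace ℝ (Fin n)} (hx : ‖x‖ ≤ R)
    (hv : 2 * R ≤ ‖v‖) : ‖q0 n (x + v) - q0 n v‖ ≤ (n + 1) * 4 ^ n * R / ‖v‖ ^ n := calc
  ‖q0 n (x + v) - q0 n v‖ ≤ (n + 1) * 4 ^ n * ‖x‖ / ‖v‖ ^ n := by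
      simpa only [q0, add_sub_cancel_right] using
        norm_inv_pow_smul_sub_inv_pow_smul_le n (u := x + v) (v := v)
          (by rw [add_sub_cancel_right]; linarith)
  _ ≤ (n + 1) * 4 ^ n * R / ‖v‖ ^ n := by gcongr

theorem q0_lattice_series_normally_convergent_codim_one_general (n : ℕ) (hn : 2 ≤ n)
    (hpn : n - 1 ≤ n)
    (K : Set (EuclideanSpace ℝ (Fin n))) (hK : IsCompact K) :
    Summable fun m : {m : Fin (n - 1) → ℤ // m ≠ 0} =>
      ⨆ x : K, ‖q0 n ((x : EuclideanSpace ℝ (Fin n)) + latticeVec n (n - 1) hpn m) -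
        q0 n (latticeVec n (n - 1) hpn m)‖ := by
  obtain ⟨R, hR, hKR⟩ := hK.isBounded.exists_pos_norm_le
  have hsum : Summable fun m : Fin (n - 1) → ℤ => (n + 1) * 4 ^ n * R * ‖m‖⁻¹ ^ n :=
    (summable_norm_inv_pow_pi_int (by simp; omega)).mul_left _
  have hfar : ∀ᶠ m : Fin (n - 1) → ℤ in cofinite, 2 * R ≤ ‖m‖ :=
    tendsto_norm_pi_int_cofinite_atTop.eventually_ge_atTop _
  suffices Summable fun m : Fin (n - 1) → ℤ =>
      ⨆ x : K, ‖q0 n ((x : EuclideanSpace ℝ (Fin n)) + latticeVec n (n - 1) hpn m) -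
        q0 n (latticeVec n (n - 1) hpn m)‖ from this.subtype (· ≠ 0)
  refine hsum.of_norm_bounded_eventually ?_
  filter_upwards [hfar] with m hm
  have hmv : ‖m‖ ≤ ‖latticeVec n (n - 1) hpn m‖ := norm_le_norm_latticeVec n (n - 1) hpn m
  have hm₀ : 0 < ‖m‖ ^ n := pow_pos (by linarith) n
  rw [Real.norm_of_nonneg (Real.iSup_nonneg fun _ => norm_nonneg _), inv_pow, ← div_eq_mul_inv]
  refine Real.iSup_le (fun x => ?_) (by positivity)
  refine (norm_q0_add_sub_q0_le n (hKR x x.2) (hm.trans hmv)).trans ?_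
  gcongr

/-- Proposition 4: for `n ≥ 2`, the series
`q₀(x) + ∑_{m ∈ ℤ^{n−1} \ {0}} (q₀(x + m) − q₀(m))` converges normally on
`ℝⁿ \ ℤ^{n−1}`: for every compact `K` avoiding the lattice,
`∑_{m ≠ 0} sup_{x ∈ K} ‖q₀(x+m) − q₀(m)‖ < ∞`. -/
theorem q0_lattice_series_normally_convergent_codim_one (n : ℕ) (hn : 2 ≤ n)
    (hpn : n - 1 ≤ n)
    (K : Set (EuclideanSpace ℝ (Fin n))) (hK : IsCompact K)
    (hKlat : ∀ x ∈ K, ∀ m : Fin (n - 1) → ℤ, x ≠ latticeVec n (n - 1) hpn m) :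
    Summable fun m : {m : Fin (n - 1) → ℤ // m ≠ 0} =>
      ⨆ x : K, ‖q0 n ((x : EuclideanSpace ℝ (Fin n)) + latticeVec n (n - 1) hpn m) -
        q0 n (latticeVec n (n - 1) hpn m)‖ :=
  q0_lattice_series_normally_convergent_codim_one_general n hn hpn K hK
end
end

section
/- Let n ≥ 1 and let m be a natural number. Suppose p : ℝⁿ → Cl_n is differentiable, positively homogeneous of degree m (i.e. p(t·u) = t^m p(u) for all t > 0 and u ∈ ℝⁿ), and left monogenic on ℝⁿ \ {0} (i.e. Dp = 0 there). Then the function u ↦ ι(u) * p(u) satisfies D(ι(u) p(u)) = −(n + 2m) · p(u) for every u ∈ ℝⁿ \ {0}; in the notation of the paper, D u p_{k−1}(u) = (−n − 2k + 2) p_{k−1}(u) for p_{k−1} monogenic homogeneous of degree k−1. -/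
/-!
Write `∂ⱼ` for `∂/∂xⱼ`. The product rule gives `∂ⱼ(u p) = eⱼ p + u ∂ⱼp`, and the Clifford
relations `eⱼ² = -1`, `eⱼ u = -2uⱼ - u eⱼ` turn `D(u p) = ∑ⱼ eⱼ ∂ⱼ(u p)` into
`-n p - 2 ∑ⱼ uⱼ ∂ⱼp - u Dp`. The middle sum is the Euler operator, which acts on functions
homogeneous of degree `m` as multiplication by `m` (differentiate `p (t • u) = t ^ m • p u` at
`t = 1`), and `Dp = 0` by monogenicity.
-/

noncomputable section

open scoped BigOperators

/-- The quadratic form `Q(v) = −‖v‖²` on `ℝⁿ` generating the Clifford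
algebra `Cl_n`. -/
def Qneg (n : ℕ) : QuadraticForm ℝ (EuclideanSpace ℝ (Fin n)) :=
  -(LinearMap.BilinMap.toQuadraticMap (innerₗ (EuclideanSpace ℝ (Fin n))))

open CliffordAlgebra

open scoped InnerProductSpace

theorem HasFDerivAt.apply_self_eq_smul_of_homogeneous {E F : Type*}
    [NormedAddCommGroup E] [NormedSpace ℝ E] [NormedAddCommGroup F] [NormedSpace ℝ F]
    {p : E → F} {p' : E →L[ℝ] F} {u : E} (hp : HasFDerivAt p p' u) (m : ℕ)
    (hhom : ∀ t : ℝ, 0 < t → p (t • u) = t ^ m • p u) :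
    p' u = (m : ℝ) • p u := by
  have hray : HasDerivAt (fun t : ℝ => p (t • u)) (p' u) 1 := by
    have hp₁ : HasFDerivAt p p' ((1 : ℝ) • u) := by rwa [one_smul]
    have := hp₁.comp_hasDerivAt 1 ((hasDerivAt_id (1 : ℝ)).smul_const u)
    rwa [one_smul] at this
  have hpow : HasDerivAt (fun t : ℝ => t ^ m • p u) ((m : ℝ) • p u) 1 := by
    simpa using (hasDerivAt_pow m (1 : ℝ)).smul_const (p u)
  have heq : (fun t : ℝ => t ^ m • p u) =ᶠ[nhds 1] fun t => p (t • u) :=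
    Filter.eventually_of_mem (Ioi_mem_nhds one_pos) fun t ht => (hhom t ht).symm
  exact (hray.congr_of_eventuallyEq heq).unique hpow

theorem ContinuousLinearMap.sum_smul_apply_single {n : ℕ} {F : Type*} [AddCommGroup F]
    [Module ℝ F] [TopologicalSpace F] (d : EuclideanSpace ℝ (Fin n) →L[ℝ] F)
    (u : EuclideanSpace ℝ (Fin n)) :
    ∑ j, u j • d (EuclideanSpace.single j 1) = d u := by
  conv_rhs => rw [← (EuclideanSpace.basisFun (Fin n) ℝ).sum_repr u]
  simp [map_sum]

section

variable {n : ℕ}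

theorem Qneg_apply (v : EuclideanSpace ℝ (Fin n)) : Qneg n v = -⟪v, v⟫_ℝ := rfl

theorem polar_Qneg (x y : EuclideanSpace ℝ (Fin n)) :
    QuadraticMap.polar (Qneg n) x y = -(2 * ⟪x, y⟫_ℝ) := by
  simp [Qneg, QuadraticMap.polar_neg, LinearMap.BilinMap.polar_toQuadraticMap, real_inner_comm]
  ring

theorem Qneg_apply_single (j : Fin n) : Qneg n (EuclideanSpace.single j 1) = -1 := by
  simp [Qneg_apply]

theorem map_ι_single_mul_self {A : Type*} [Ring A] [Algebra ℝ A]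
    (φ : CliffordAlgebra (Qneg n) →ₐ[ℝ] A) (j : Fin n) :
    φ (ι (Qneg n) (EuclideanSpace.single j 1)) * φ (ι (Qneg n) (EuclideanSpace.single j 1)) =
      -1 := by
  rw [← map_mul, ι_sq_scalar, Qneg_apply_single, map_neg, map_one, map_neg, map_one]

theorem map_ι_mul_map_ι_comm {A : Type*} [Ring A] [Algebra ℝ A]
    (φ : CliffordAlgebra (Qneg n) →ₐ[ℝ] A) (x y : EuclideanSpace ℝ (Fin n)) :
    φ (ι (Qneg n) x) * φ (ι (Qneg n) y) =
      (-(2 * ⟪x, y⟫_ℝ)) • 1 - φ (ι (Qneg n) y) * φ (ι (Qneg n) x) := by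
  rw [← map_mul, ι_mul_ι_comm, polar_Qneg, map_sub, AlgHom.commutes,
    Algebra.algebraMap_eq_smul_one, map_mul]

variable {A : Type*} [NormedRing A] [NormedAlgebra ℝ A]
  (φ : CliffordAlgebra (Qneg n) →ₐ[ℝ] A)

def dirac (f : EuclideanSpace ℝ (Fin n) → A) (u : EuclideanSpace ℝ (Fin n)) : A :=
  ∑ j, φ (ι (Qneg n) (EuclideanSpace.single j 1)) * fderiv ℝ f u (EuclideanSpace.single j 1)

theorem fderiv_ι_mul {p : EuclideanSpace ℝ (Fin n) → A} {u : EuclideanSpace ℝ (Fin n)}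
    (hp : DifferentiableAt ℝ p u) (w : EuclideanSpace ℝ (Fin n)) :
    fderiv ℝ (fun v => φ (ι (Qneg n) v) * p v) u w =
      φ (ι (Qneg n) u) * fderiv ℝ p u w + φ (ι (Qneg n) w) * p u := by
  let L : EuclideanSpace ℝ (Fin n) →L[ℝ] A :=
    LinearMap.toContinuousLinearMap (φ.toLinearMap ∘ₗ ι (Qneg n))
  have hL : (fun v => φ (ι (Qneg n) v) * p v) = ⇑L * p := rfl
  rw [hL, (L.hasFDerivAt.mul' hp.hasFDerivAt).fderiv]
  rfl

theorem dirac_ι_mul {p : EuclideanSpace ℝ (Fin n) → A} {u : EuclideanSpace ℝ (Fin n)}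
    (hp : DifferentiableAt ℝ p u) :
    dirac φ (fun v => φ (ι (Qneg n) v) * p v) u =
      -(2 : ℝ) • fderiv ℝ p u u - φ (ι (Qneg n) u) * dirac φ p u - (n : ℝ) • p u := by
  have hterm : ∀ j, φ (ι (Qneg n) (EuclideanSpace.single j 1)) *
      fderiv ℝ (fun v => φ (ι (Qneg n) v) * p v) u (EuclideanSpace.single j 1) =
      -(2 : ℝ) • (u j • fderiv ℝ p u (EuclideanSpace.single j 1)) -
        φ (ι (Qneg n) u) * (φ (ι (Qneg n) (EuclideanSpace.single j 1)) *
          fderiv ℝ p u (EuclideanSpace.single j 1)) - p u := by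
    intro j
    rw [fderiv_ι_mul φ hp, mul_add, ← mul_assoc, ← mul_assoc, map_ι_single_mul_self,
      map_ι_mul_map_ι_comm, EuclideanSpace.inner_single_left, map_one, one_mul,
      sub_mul, smul_one_mul, neg_one_mul, mul_assoc]
    module
  rw [dirac, dirac, Finset.sum_congr rfl fun j _ => hterm j]
  simp only [Finset.sum_sub_distrib, ← Finset.smul_sum, ← Finset.mul_sum,
    ContinuousLinearMap.sum_smul_apply_single, Finset.sum_const, Finset.card_univ,
    Fintype.card_fin, Nat.cast_smul_eq_nsmul]

end

theorem dirac_of_vector_times_monogenic_general (n m : ℕ)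
    (A : Type*) [NormedRing A] [NormedAlgebra ℝ A]
    (φ : CliffordAlgebra (Qneg n) ≃ₐ[ℝ] A)
    (p : EuclideanSpace ℝ (Fin n) → A)
    (hdiff : Differentiable ℝ p)
    (hhom : ∀ t : ℝ, 0 < t → ∀ u : EuclideanSpace ℝ (Fin n),
      p (t • u) = t ^ m • p u)
    (hmono : ∀ u : EuclideanSpace ℝ (Fin n), u ≠ 0 →
      ∑ j : Fin n, φ (CliffordAlgebra.ι (Qneg n) (EuclideanSpace.single j 1)) *
        fderiv ℝ p u (EuclideanSpace.single j 1) = 0) :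
    ∀ u : EuclideanSpace ℝ (Fin n), u ≠ 0 →
      ∑ j : Fin n, φ (CliffordAlgebra.ι (Qneg n) (EuclideanSpace.single j 1)) *
          fderiv ℝ (fun v => φ (CliffordAlgebra.ι (Qneg n) v) * p v) u
            (EuclideanSpace.single j 1) =
        (-((n : ℝ) + 2 * m)) • p u := by
  intro u hu
  have hDp : dirac φ.toAlgHom p u = 0 := hmono u hu
  have heuler : fderiv ℝ p u u = (m : ℝ) • p u :=
    (hdiff u).hasFDerivAt.apply_self_eq_smul_of_homogeneous m fun t ht => hhom t ht u
  change dirac φ.toAlgHom (fun v => φ.toAlgHom (ι (Qneg n) v) * p v) u = _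
  rw [dirac_ι_mul φ.toAlgHom (hdiff u), hDp, heuler, mul_zero, sub_zero, smul_smul, ← sub_smul]
  congr 1
  ring

/-- if `p : ℝⁿ → Cl_n` is differentiable, positively homogeneous
of degree `m`, and left monogenic on `ℝⁿ \ {0}`, then
`D(ι(u) p(u)) = −(n + 2m) p(u)` on `ℝⁿ \ {0}`.  Here `Cl_n` is realized as a
normed `ℝ`-algebra `A` via an algebra isomorphism `φ`, and
`Df(x) = ∑_j ι(e_j) ∂f/∂x_j(x)`. -/
theorem dirac_of_vector_times_monogenic (n m : ℕ) (hn : 1 ≤ n)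
    (A : Type*) [NormedRing A] [NormedAlgebra ℝ A]
    (φ : CliffordAlgebra (Qneg n) ≃ₐ[ℝ] A)
    (p : EuclideanSpace ℝ (Fin n) → A)
    (hdiff : Differentiable ℝ p)
    (hhom : ∀ t : ℝ, 0 < t → ∀ u : EuclideanSpace ℝ (Fin n),
      p (t • u) = t ^ m • p u)
    (hmono : ∀ u : EuclideanSpace ℝ (Fin n), u ≠ 0 →
      ∑ j : Fin n, φ (CliffordAlgebra.ι (Qneg n) (EuclideanSpace.single j 1)) *
        fderiv ℝ p u (EuclideanSpace.single j 1) = 0) :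
    ∀ u : EuclideanSpace ℝ (Fin n), u ≠ 0 →
      ∑ j : Fin n, φ (CliffordAlgebra.ι (Qneg n) (EuclideanSpace.single j 1)) *
          fderiv ℝ (fun v => φ (CliffordAlgebra.ι (Qneg n) v) * p v) u
            (EuclideanSpace.single j 1) =
        (-((n : ℝ) + 2 * m)) • p u :=
  dirac_of_vector_times_monogenic_general n m A φ p hdiff hhom hmono
end
end
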